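/- arXiv:2204.13215 — 8 statements merged into one kernel-verified Lean document; each statement's English description precedes it below -/
import Mathlib

section
/- Let ψ be a conjunction-free formula of the positive fragment L⁺(F_p^∞) in canonical form, ρ a run of an LTS L, and k ∈ ℕ. Then: (a) if (ρ,k) ⊭ F_p^∞ ψ then (ρ,k) ⊭ ψ; and (b) if (ρ,k) ⊨ F_p^∞ ψ then (ρ,2k) ⊨ ψ. -/
open scoped Classical
open MeasureTheory

/-- A labelled transition system: a finite set of states `S`, an initial state,
a transition relation in which every state has at least one successor, and a
labeling of states by sets of atomic propositions. -/
structure LTS (S AP : Type) where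
  init : S
  T : S → S → Prop
  lbl : S → Set AP
  succ_nonempty : ∀ s : S, ∃ t : S, T s t

variable {S AP : Type}

/-- A run of an LTS: an infinite sequence of states following the transitions. -/
def IsRun (L : LTS S AP) (ρ : ℕ → S) : Prop := ∀ i : ℕ, L.T (ρ i) (ρ (i + 1))

/-- The shifted run `ρ[i..]`. -/
def shift (ρ : ℕ → S) (i : ℕ) : ℕ → S := fun n => ρ (n + i)

/-- A state formula: a (possibly empty, i.e. `false`) disjunction of literals,
each literal being a polarity (`true` = positive) paired with an atomic proposition. -/
abbrev StateFormula (AP : Type) := List (Bool × AP)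

/-- A state `s` satisfies a state formula `θ`. -/
def SatState (L : LTS S AP) (θ : StateFormula AP) (s : S) : Prop :=
  ∃ p ∈ θ, if p.1 then p.2 ∈ L.lbl s else p.2 ∉ L.lbl s

/-- A conjunction-free formula in canonical form `ψ = θ ∨ ⋁ F_p^∞ ψᵢ`, identified
with its tree `T(ψ)`: a root labeled by the state formula `θ` whose children are
the trees of the `ψᵢ`. -/
inductive CTree (AP : Type) : Type where
  | node : StateFormula AP → List (CTree AP) → CTree AP

/-- Satisfaction `(ρ, k) ⊨ ψ` for a canonical conjunction-free formula
`ψ = θ ∨ ⋁ F_p^∞ ψᵢ`. -/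
def SatC (L : LTS S AP) : CTree AP → (ℕ → S) → ℕ → Prop
  | .node θ cs, ρ, k =>
      SatState L θ (ρ 0) ∨
      ∃ c ∈ cs.attach, ∀ i : ℕ, ∃ j ≤ k, SatC L c.1 (shift ρ (i + j)) k
termination_by t => sizeOf t
decreasing_by
  have := List.sizeOf_lt_of_mem c.2
  simp only [CTree.node.sizeOf_spec]
  omega

/-- Satisfaction `(ρ, k) ⊨ F_p^∞ ψ` for a canonical conjunction-free formula `ψ`. -/
def SatFinfC (L : LTS S AP) (t : CTree AP) (ρ : ℕ → S) (k : ℕ) : Prop :=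
  ∀ i : ℕ, ∃ j ≤ k, SatC L t (shift ρ (i + j)) k

lemma shift_shift (ρ : ℕ → S) (i m : ℕ) : shift (shift ρ i) m = shift ρ (m + i) :=
  funext fun n => by simp [shift, Nat.add_assoc]

lemma satC_mono (L : LTS S AP) : ∀ (t : CTree AP) (ρ : ℕ → S) {k k' : ℕ}, k ≤ k' →
    SatC L t ρ k → SatC L t ρ k'
  | .node θ cs, ρ, k, k', hkk, h => by
    rw [SatC] at h ⊢
    rcases h with h | ⟨c, hc, hcall⟩
    · exact Or.inl h
    · refine Or.inr ⟨c, hc, fun i => ?_⟩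
      obtain ⟨j, hj, hs⟩ := hcall i
      exact ⟨j, hj.trans hkk, satC_mono L c.1 _ hkk hs⟩
termination_by t => sizeOf t
decreasing_by
  have := List.sizeOf_lt_of_mem c.2
  simp only [CTree.node.sizeOf_spec]
  omega

/-- For a conjunction-free canonical formula `ψ` of the positive
fragment `L⁺(F_p^∞)` (its root state formula is the empty disjunction `false`),
a run `ρ` of `L` and `k : ℕ`:
(a) if `(ρ,k) ⊭ F_p^∞ ψ` then `(ρ,k) ⊭ ψ`;
(b) if `(ρ,k) ⊨ F_p^∞ ψ` then `(ρ,2k) ⊨ ψ`. -/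
theorem positive_finf_absorption (L : LTS S AP) [Fintype S] (cs : List (CTree AP))
    (ρ : ℕ → S) (hρ : IsRun L ρ) (k : ℕ) :
    (¬ SatFinfC L (.node [] cs) ρ k → ¬ SatC L (.node [] cs) ρ k) ∧
    (SatFinfC L (.node [] cs) ρ k → SatC L (.node [] cs) ρ (2 * k)) := by
  constructor
  · intro hnf hs
    apply hnf
    rw [SatC] at hs
    rcases hs with h | ⟨c, hc, hcall⟩
    · exact absurd h (by simp [SatState])
    · intro i
      refine ⟨0, Nat.zero_le k, ?_⟩
      rw [SatC]
      refine Or.inr ⟨c, hc, fun i' => ?_⟩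
      obtain ⟨j, hj, hs⟩ := hcall (i + i')
      refine ⟨j, hj, ?_⟩
      rw [shift_shift]
      convert hs using 2
      omega
  · intro hf
    obtain ⟨j, hj, hs⟩ := hf 0
    rw [SatC] at hs
    rcases hs with h | ⟨c, hc, hcall⟩
    · exact absurd h (by simp [SatState])
    · rw [SatC]
      refine Or.inr ⟨c, hc, fun i => ?_⟩
      rcases le_or_gt j i with hji | hij
      · obtain ⟨j', hj', hs⟩ := hcall (i - j)
        refine ⟨j', by omega, ?_⟩
        rw [shift_shift] at hs
        have : i - j + j' + (0 + j) = i + j' := by omega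
        rw [this] at hs
        exact satC_mono L _ _ (by omega) hs
      · obtain ⟨j', hj', hs⟩ := hcall 0
        rw [shift_shift] at hs
        refine ⟨j + j' - i, by omega, ?_⟩
        have : i + (j + j' - i) = 0 + j' + (0 + j) := by omega
        rw [this]
        exact satC_mono L _ _ (by omega) hs
end

section
/- Cylinder witness lemma: let L be an LTS, φ ∈ L(F_p^∞), k ∈ ℕ, and ρ a run of L with (ρ,k) ⊭ φ. Then there exists n ∈ ℕ such that every run ρ' of L that agrees with ρ on positions 0, …, n (i.e. ρ' belongs to the cylinder Cyl(ρ[..n])) satisfies (ρ',k) ⊭ φ. -/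
open scoped Classical
open MeasureTheory

variable {S AP : Type}

/-- Formulas of the prompt Muller fragment `L(F_p^∞)`:
`φ ::= α | ¬α | φ ∨ φ | φ ∧ φ | F_p^∞ φ`. -/
inductive PM (AP : Type) : Type where
  | pos : AP → PM AP
  | neg : AP → PM AP
  | or : PM AP → PM AP → PM AP
  | and : PM AP → PM AP → PM AP
  | finf : PM AP → PM AP

/-- Satisfaction `(ρ, k) ⊨ φ` of a prompt Muller formula by a run at bound `k`. -/
def Sat (L : LTS S AP) : PM AP → (ℕ → S) → ℕ → Prop
  | .pos a, ρ, _ => a ∈ L.lbl (ρ 0)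
  | .neg a, ρ, _ => a ∉ L.lbl (ρ 0)
  | .or φ ψ, ρ, k => Sat L φ ρ k ∨ Sat L ψ ρ k
  | .and φ ψ, ρ, k => Sat L φ ρ k ∧ Sat L ψ ρ k
  | .finf φ, ρ, k => ∀ i : ℕ, ∃ j ≤ k, Sat L φ (shift ρ (i + j)) k

lemma shift_isRun (L : LTS S AP) (ρ : ℕ → S) (h : IsRun L ρ) (m : ℕ) :
    IsRun L (shift ρ m) := by
  intro i
  simpa [shift, Nat.add_right_comm] using h (i + m)

lemma cylinder_aux (L : LTS S AP) (φ : PM AP) (k : ℕ) :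
    ∀ ρ : ℕ → S, ¬ Sat L φ ρ k →
    ∃ n : ℕ, ∀ ρ' : ℕ → S, (∀ i ≤ n, ρ' i = ρ i) → ¬ Sat L φ ρ' k := by
  induction φ with
  | pos a =>
      intro ρ h
      exact ⟨0, fun ρ' hag hs => h (by simpa [Sat, hag 0 le_rfl] using hs)⟩
  | neg a =>
      intro ρ h
      exact ⟨0, fun ρ' hag hs => h (by simpa [Sat, hag 0 le_rfl] using hs)⟩
  | or φ ψ ihφ ihψ =>
      intro ρ h
      simp only [Sat, not_or] at h
      obtain ⟨n₁, h₁⟩ := ihφ ρ h.1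
      obtain ⟨n₂, h₂⟩ := ihψ ρ h.2
      refine ⟨max n₁ n₂, fun ρ' hag hs => ?_⟩
      rcases hs with hs | hs
      · exact h₁ ρ' (fun i hi => hag i (hi.trans (le_max_left _ _))) hs
      · exact h₂ ρ' (fun i hi => hag i (hi.trans (le_max_right _ _))) hs
  | and φ ψ ihφ ihψ =>
      intro ρ h
      simp only [Sat, not_and_or] at h
      rcases h with h | h
      · obtain ⟨n, hn⟩ := ihφ ρ h
        exact ⟨n, fun ρ' hag hs => hn ρ' hag hs.1⟩
      · obtain ⟨n, hn⟩ := ihψ ρ h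
        exact ⟨n, fun ρ' hag hs => hn ρ' hag hs.2⟩
  | finf φ ih =>
      intro ρ h
      simp only [Sat, not_forall, not_exists, not_and'] at h
      obtain ⟨i, hi⟩ := h
      choose N hN using fun j (hj : j ≤ k) => ih (shift ρ (i + j)) (fun hs => hi j hs hj)
      refine ⟨i + k + (Finset.range (k + 1)).sup (fun j => if hj : j ≤ k then N j hj else 0),
        fun ρ' hag hs => ?_⟩
      obtain ⟨j, hj, hsat⟩ := hs i
      refine hN j hj (shift ρ' (i + j)) (fun m hm => ?_) hsat
      have : m + (i + j) ≤ i + k + (Finset.range (k + 1)).sup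
          (fun j => if hj : j ≤ k then N j hj else 0) := by
        have hle : N j hj ≤ (Finset.range (k + 1)).sup
            (fun j => if hj : j ≤ k then N j hj else 0) := by
          have := Finset.le_sup (f := fun j => if hj : j ≤ k then N j hj else 0)
            (Finset.mem_range.mpr (Nat.lt_succ_of_le hj))
          simpa [hj] using this
        omega
      simpa [shift] using hag (m + (i + j)) this

/-- **cylinder witness lemma.** If a run `ρ` of `L` has `(ρ,k) ⊭ φ`,
then there is `n` such that every run `ρ'` of `L` agreeing with `ρ` on positions
`0, …, n` also has `(ρ',k) ⊭ φ`. -/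
theorem cylinder_witness (L : LTS S AP) [Fintype S] (φ : PM AP) (k : ℕ)
    (ρ : ℕ → S) (hρ : IsRun L ρ) (h : ¬ Sat L φ ρ k) :
    ∃ n : ℕ, ∀ ρ' : ℕ → S, IsRun L ρ' → (∀ i ≤ n, ρ' i = ρ i) → ¬ Sat L φ ρ' k := by
  obtain ⟨n, hn⟩ := cylinder_aux L φ k ρ h
  exact ⟨n, fun ρ' _ hag => hn ρ' hag⟩
end

section
/- Universal and fair prompt model checking coincide on the prompt Muller fragment: for every LTS L and every φ ∈ L(F_p^∞), there exists k ∈ ℕ such that every initialized run ρ of L satisfies (ρ,k) ⊨ φ, if and only if there exists k ∈ ℕ such that μ_L({ρ : (ρ,k) ⊨ φ}) = 1, where μ_L is the fair-coin measure of L. -/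
open scoped Classical
open MeasureTheory

variable {S AP : Type}

/-- The probability of one fair-coin step from `s` to `t`: the successor is chosen
uniformly at random among the successors of `s`. -/
noncomputable def stepProb (L : LTS S AP) (s t : S) : ENNReal :=
  if L.T s t then ((Nat.card {u : S // L.T s u} : ENNReal))⁻¹ else 0

/-- The product of the step probabilities along a finite sequence of states. -/
noncomputable def chainProb (L : LTS S AP) : List S → ENNReal
  | [] => 1
  | [_] => 1
  | s :: t :: rest => stepProb L s t * chainProb L (t :: rest)

/-- The cylinder `Cyl w` of infinite sequences extending the finite word `w`. -/
def Cyl (w : List S) : Set (ℕ → S) := {ρ | ∀ i : Fin w.length, ρ i = w.get i}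

/-- The fair-coin probability of the cylinder of a finite word: `1` on the initial
state, then the product of the uniform step probabilities. -/
noncomputable def pathProb (L : LTS S AP) (w : List S) : ENNReal :=
  (if w.head? = some L.init then 1 else 0) * chainProb L w

/-- `μ` is the fair-coin measure of `L`: the trajectory (Ionescu–Tulcea) law of the
Markov chain started at `L.init` that moves from each state to a uniformly chosen
successor; it is the unique probability measure on `S^ℕ` (product σ-algebra, `S`
discrete) giving every nonempty cylinder its path probability. -/
def IsFairMeasure [MeasurableSpace S] (L : LTS S AP) (μ : Measure (ℕ → S)) : Prop :=
  IsProbabilityMeasure μ ∧ ∀ w : List S, w ≠ [] → μ (Cyl w) = pathProb L w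

/-! Every formula of the fragment defines a closed set of runs in the product of discrete
topologies, so a satisfaction set of measure one contains every run all of whose cylinders
have positive measure; under the fair-coin measure these are exactly the initialized runs.
Conversely, almost every run is initialized, since the complement is covered by countably many
cylinders of probability zero. -/

open PiNat

theorem stepProb_ne_zero_iff (L : LTS S AP) (s t : S) : stepProb L s t ≠ 0 ↔ L.T s t := by
  unfold stepProb
  split_ifs with h <;> simp [h]

theorem chainProb_ne_zero_iff (L : LTS S AP) : ∀ w : List S, chainProb L w ≠ 0 ↔ w.IsChain L.T
  | [] => by simp [chainProb]
  | [_] => by simp [chainProb]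
  | s :: t :: w => by
    rw [chainProb, List.isChain_cons_cons, mul_ne_zero_iff, stepProb_ne_zero_iff,
      chainProb_ne_zero_iff L (t :: w)]

theorem pathProb_map_range_ne_zero_iff (L : LTS S AP) (ρ : ℕ → S) (n : ℕ) :
    pathProb L ((List.range (n + 1)).map ρ) ≠ 0 ↔
      ρ 0 = L.init ∧ ∀ m < n, L.T (ρ m) (ρ (m + 1)) := by
  rw [pathProb, mul_ne_zero_iff, chainProb_ne_zero_iff, List.isChain_map,
    List.isChain_range_succ]
  simp [List.range_succ_eq_map]

theorem isRun_and_init_iff (L : LTS S AP) (ρ : ℕ → S) :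
    IsRun L ρ ∧ ρ 0 = L.init ↔ ∀ n, pathProb L ((List.range (n + 1)).map ρ) ≠ 0 := by
  simp only [pathProb_map_range_ne_zero_iff]
  constructor
  · rintro ⟨hρ, h0⟩ n
    exact ⟨h0, fun m _ => hρ m⟩
  · intro h
    exact ⟨fun i => (h (i + 1)).2 i (lt_add_one i), (h 0).1⟩

theorem cyl_map_range (ρ : ℕ → S) (n : ℕ) : Cyl ((List.range n).map ρ) = cylinder ρ n := by
  ext σ
  simp [Cyl, mem_cylinder_iff, Fin.forall_iff]

theorem measurableSet_cylinder [MeasurableSpace S] [MeasurableSingletonClass S]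
    (ρ : ℕ → S) (n : ℕ) : MeasurableSet (cylinder ρ n) := by
  rw [cylinder_eq_pi]
  exact MeasurableSet.pi (Finset.range n).countable_toSet fun i _ => measurableSet_singleton _

theorem mem_of_isClosed_of_measure_eq_one [TopologicalSpace S] [DiscreteTopology S]
    [MeasurableSpace S] [MeasurableSingletonClass S] {μ : Measure (ℕ → S)}
    [IsProbabilityMeasure μ] {C : Set (ℕ → S)} (hC : IsClosed C) (hμC : μ C = 1)
    {ρ : ℕ → S} (hρ : ∀ n, μ (cylinder ρ n) ≠ 0) : ρ ∈ C := by
  by_contra hρC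
  obtain ⟨_, ⟨x, n, rfl⟩, hρx, hxC⟩ :=
    (isTopologicalBasis_cylinders fun _ => S).exists_subset_of_mem_open hρC hC.isOpen_compl
  rw [← mem_cylinder_iff_eq.1 hρx] at hxC
  have hlt : μ Set.univ < μ C + μ (cylinder ρ n) := by
    rw [measure_univ, hμC]
    exact ENNReal.lt_add_right ENNReal.one_ne_top (hρ n)
  obtain ⟨σ, hσC, hσ⟩ := nonempty_inter_of_measure_lt_add μ (measurableSet_cylinder ρ n)
    (Set.subset_univ C) (Set.subset_univ _) hlt
  exact hxC hσ hσC

theorem isClosed_setOf_sat [TopologicalSpace S] [DiscreteTopology S] (L : LTS S AP)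
    (φ : PM AP) (k : ℕ) : IsClosed {ρ : ℕ → S | Sat L φ ρ k} := by
  induction φ with
  | pos a => exact (isClosed_discrete {s : S | a ∈ L.lbl s}).preimage (continuous_apply (A := fun _ => S) 0)
  | neg a => exact (isClosed_discrete {s : S | a ∉ L.lbl s}).preimage (continuous_apply (A := fun _ => S) 0)
  | or φ ψ hφ hψ => exact hφ.union hψ
  | and φ ψ hφ hψ => exact hφ.inter hψ
  | finf φ hφ =>
    have hshift (m : ℕ) : Continuous fun ρ : ℕ → S => shift ρ m :=
      continuous_pi fun n => continuous_apply (n + m)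
    have hset : {ρ : ℕ → S | Sat L (.finf φ) ρ k} =
        ⋂ i, ⋃ j ∈ Finset.range (k + 1), (shift · (i + j)) ⁻¹' {ρ | Sat L φ ρ k} := by
      ext ρ
      simp [Sat]
    rw [hset]
    exact isClosed_iInter fun i => isClosed_biUnion_finset fun j _ => hφ.preimage (hshift _)

namespace IsFairMeasure

variable [MeasurableSpace S] {L : LTS S AP} {μ : Measure (ℕ → S)}

theorem measure_cylinder_succ (hμ : IsFairMeasure L μ) (ρ : ℕ → S) (n : ℕ) :
    μ (cylinder ρ (n + 1)) = pathProb L ((List.range (n + 1)).map ρ) := by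
  rw [← cyl_map_range]
  exact hμ.2 _ (by simp)

theorem measure_cylinder_ne_zero (hμ : IsFairMeasure L μ) {ρ : ℕ → S} (hρ : IsRun L ρ)
    (h0 : ρ 0 = L.init) (n : ℕ) : μ (cylinder ρ n) ≠ 0 := by
  have hpos : 0 < μ (cylinder ρ (n + 1)) := by
    rw [pos_iff_ne_zero, hμ.measure_cylinder_succ]
    exact (isRun_and_init_iff L ρ).1 ⟨hρ, h0⟩ n
  exact (hpos.trans_le (measure_mono (cylinder_anti ρ n.le_succ))).ne'

theorem ae_isRun_and_init [Countable S] (hμ : IsFairMeasure L μ) :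
    ∀ᵐ ρ ∂μ, IsRun L ρ ∧ ρ 0 = L.init := by
  simp_rw [isRun_and_init_iff, ae_all_iff]
  intro n
  have hnull : μ (⋃ w : {w : List S // w ≠ [] ∧ pathProb L w = 0}, Cyl w.1) = 0 :=
    measure_iUnion_null fun w => (hμ.2 w.1 w.2.1).trans w.2.2
  refine measure_mono_null (fun ρ hρ => Set.mem_iUnion.2 ?_) hnull
  refine ⟨⟨_, by simp, not_not.1 hρ⟩, ?_⟩
  rw [cyl_map_range]
  exact self_mem_cylinder ρ _

end IsFairMeasure

/-- Universal and fair prompt model checking coincide on the prompt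
Muller fragment: there is `k` such that every initialized run satisfies `(ρ,k) ⊨ φ`
iff there is `k` such that the fair-coin measure of `{ρ : (ρ,k) ⊨ φ}` is `1`. -/
theorem universal_iff_fair [Fintype S] [MeasurableSpace S] [DiscreteMeasurableSpace S]
    (L : LTS S AP) (φ : PM AP) (μ : Measure (ℕ → S)) (hμ : IsFairMeasure L μ) :
    (∃ k : ℕ, ∀ ρ : ℕ → S, IsRun L ρ → ρ 0 = L.init → Sat L φ ρ k) ↔
    (∃ k : ℕ, μ {ρ : ℕ → S | Sat L φ ρ k} = 1) := by
  have := hμ.1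
  let : TopologicalSpace S := ⊥
  have : DiscreteTopology S := ⟨rfl⟩
  constructor
  · rintro ⟨k, hk⟩
    have hfull : {ρ | Sat L φ ρ k} =ᵐ[μ] (Set.univ : Set (ℕ → S)) :=
      ae_eq_univ.2 (hμ.ae_isRun_and_init.mono fun ρ hρ => hk ρ hρ.1 hρ.2)
    exact ⟨k, by rw [measure_congr hfull, measure_univ]⟩
  · rintro ⟨k, hk⟩
    exact ⟨k, fun ρ hρ h0 => mem_of_isClosed_of_measure_eq_one (isClosed_setOf_sat L φ k) hk
      (hμ.measure_cylinder_ne_zero hρ h0)⟩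
end

section
/- Sure attractor and avoiding cycles: let B be a BSCC of an LTS L and θ a state formula. Write S^θ_B = {s ∈ B : s satisfies θ}, SPred_B(U) = {s ∈ B : Succ(s) ⊆ U} for U ⊆ B, and SPred*_B(U) for the least fixed point of the operator V ↦ V ∪ SPred_B(V) containing U. Then SPred*_B(S^θ_B) = B if and only if B contains no θ-avoiding cycle. -/
open scoped Classical
open MeasureTheory

variable {S AP : Type}

/-- A (nonempty) finite path of the LTS. -/
def IsPath (L : LTS S AP) (u : List S) : Prop := u ≠ [] ∧ u.Chain' L.T

/-- A loop: a finite path with at least one transition whose first and last states coincide. -/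
def IsLoop (L : LTS S AP) (u : List S) : Prop :=
  2 ≤ u.length ∧ u.Chain' L.T ∧ u.head? = u.getLast?

/-- The set `occ u` of states occurring in a finite sequence. -/
def occ (u : List S) : Set S := {s | s ∈ u}

/-- Reachability along transitions. -/
def Reachable (L : LTS S AP) : S → S → Prop := Relation.ReflTransGen L.T

/-- A strongly connected component: an equivalence class of mutual reachability. -/
def IsSCC (L : LTS S AP) (C : Set S) : Prop :=
  ∃ s : S, C = {t : S | Reachable L s t ∧ Reachable L t s}

/-- A bottom strongly connected component: an SCC closed under transitions. -/
def IsBSCC (L : LTS S AP) (C : Set S) : Prop :=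
  IsSCC L C ∧ ∀ s ∈ C, ∀ t : S, L.T s t → t ∈ C

/-- The sure attractor `SPred*_B(U)`: the least fixed point, above `U`, of the
operator `V ↦ V ∪ SPred_B(V)` where `SPred_B(V) = {s ∈ B : Succ(s) ⊆ V}`. -/
def SPredStar (L : LTS S AP) (B U : Set S) : Set S :=
  ⋂₀ {W : Set S | U ⊆ W ∧ ∀ s ∈ B, (∀ t : S, L.T s t → t ∈ W) → s ∈ W}


/-!
A loop `u` avoiding `U` can never enter the attractor: the complement of `occ u` contains `U` and
is closed under `SPred_B`, since every state of a loop has a successor on the loop. Conversely,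
every state of `B` outside the attractor has a successor outside it, which lies in `B` again as `B`
is bottom; walking along such successors in the finite set `B` must eventually revisit a state,
and this closes a loop that avoids the attractor and hence `θ`.
-/

section SPredStar

variable {L : LTS S AP} {B U W : Set S} {s : S}

theorem sPredStar_subset (hUW : U ⊆ W) (hW : ∀ s ∈ B, (∀ t, L.T s t → t ∈ W) → s ∈ W) :
    SPredStar L B U ⊆ W :=
  Set.sInter_subset_of_mem ⟨hUW, hW⟩

theorem subset_sPredStar : U ⊆ SPredStar L B U :=
  fun _ hs _ hW => hW.1 hs

theorem mem_sPredStar_of_forall_succ (hs : s ∈ B) (h : ∀ t, L.T s t → t ∈ SPredStar L B U) :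
    s ∈ SPredStar L B U :=
  fun W hW => hW.2 s hs fun t ht => h t ht W hW

theorem sPredStar_subset_self (hU : U ⊆ B) : SPredStar L B U ⊆ B :=
  sPredStar_subset hU fun _ hs _ => hs

theorem exists_succ_mem_diff_sPredStar (hB : ∀ s ∈ B, ∀ t, L.T s t → t ∈ B)
    (hs : s ∈ B \ SPredStar L B U) : ∃ t ∈ B \ SPredStar L B U, L.T s t := by
  obtain ⟨t, hst, ht⟩ : ∃ t, L.T s t ∧ t ∉ SPredStar L B U := by
    by_contra! h
    exact hs.2 (mem_sPredStar_of_forall_succ hs.1 h)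
  exact ⟨t, ⟨hB s hs.1 t hst, ht⟩, hst⟩

end SPredStar

section Loops

variable {L : LTS S AP} {u : List S}

theorem IsLoop.exists_mem (hu : IsLoop L u) : ∃ s, s ∈ u :=
  List.exists_mem_of_length_pos (by have := hu.1; omega)

theorem IsLoop.exists_succ_mem (hu : IsLoop L u) {s : S} (hs : s ∈ u) : ∃ t ∈ u, L.T s t := by
  obtain ⟨hlen, hchain, hends⟩ := hu
  obtain ⟨i, hi, rfl⟩ := List.mem_iff_getElem.mp hs
  by_cases hlast : i + 1 < u.length
  · exact ⟨u[i + 1], List.getElem_mem _, List.isChain_iff_getElem.mp hchain i hlast⟩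
  · have hfirst : u[0] = u[i] := by
      rw [List.head?_eq_getElem?, List.getLast?_eq_getElem?, show u.length - 1 = i by omega,
        List.getElem?_eq_getElem (by omega), List.getElem?_eq_getElem hi] at hends
      exact Option.some_injective _ hends
    rw [← hfirst]
    exact ⟨u[1], List.getElem_mem _, List.isChain_iff_getElem.mp hchain 0 (by omega)⟩

theorem IsLoop.notMem_sPredStar (hu : IsLoop L u) (hU : ∀ s ∈ u, s ∉ U) {B : Set S} {s : S}
    (hs : s ∈ u) : s ∉ SPredStar L B U := by
  have hclosed : SPredStar L B U ⊆ (occ u)ᶜ :=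
    sPredStar_subset (fun t ht htu => hU t htu ht) fun t _ hsucc htu => by
      obtain ⟨t', ht'u, htt'⟩ := hu.exists_succ_mem htu
      exact hsucc t' htt' ht'u
  exact fun h => hclosed h hs

theorem isLoop_map_iterate {α : Type*} {g : α → α} {v : α → S} (hv : ∀ a, L.T (v a) (v (g a)))
    {a : α} {p : ℕ} (hp : 0 < p) (ha : g^[p] a = a) :
    IsLoop L ((List.range (p + 1)).map fun k => v (g^[k] a)) := by
  refine ⟨by simp; omega, ?_, by simp [List.head?_range, List.getLast?_range, ha]⟩
  refine (List.isChain_map _).mpr <| (List.isChain_range_succ _ _).mpr fun k _ => ?_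
  simpa only [Function.iterate_succ_apply'] using hv (g^[k] a)

theorem exists_isLoop_subset_of_forall_exists_succ {X : Set S} (hfin : X.Finite)
    (hX : X.Nonempty) (hsucc : ∀ s ∈ X, ∃ t ∈ X, L.T s t) : ∃ u, IsLoop L u ∧ occ u ⊆ X := by
  have := hfin.to_subtype
  obtain ⟨x, hx⟩ := hX
  choose g hg using fun s : X => hsucc s s.2
  let next : X → X := fun s => ⟨g s, (hg s).1⟩
  obtain ⟨m, n, hmn, hrepeat⟩ := Set.finite_univ.exists_lt_map_eq_of_forall_mem
    (f := fun k => next^[k] ⟨x, hx⟩) fun _ => Set.mem_univ _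
  have hperiod : next^[n - m] (next^[m] ⟨x, hx⟩) = next^[m] ⟨x, hx⟩ := by
    rw [← Function.iterate_add_apply, Nat.sub_add_cancel hmn.le]
    exact hrepeat.symm
  refine ⟨_, isLoop_map_iterate (v := Subtype.val) (fun s => (hg s).2) (by omega) hperiod, ?_⟩
  rintro _ hs
  obtain ⟨k, -, rfl⟩ := List.mem_map.mp hs
  exact Subtype.coe_prop _

end Loops

/-- **sure attractor and avoiding cycles.** For a BSCC `B` of `L` and
a state formula `θ`: `SPred*_B(S^θ_B) = B` iff `B` contains no `θ`-avoiding cycle. -/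
theorem sure_attractor_iff_no_avoiding_cycle [Fintype S] (L : LTS S AP) (B : Set S)
    (hB : IsBSCC L B) (θ : StateFormula AP) :
    SPredStar L B {s ∈ B | SatState L θ s} = B ↔
    ¬ ∃ u : List S, IsLoop L u ∧ occ u ⊆ B ∧ ∀ s ∈ u, ¬ SatState L θ s := by
  constructor
  · rintro hattr ⟨u, hu, huB, havoid⟩
    obtain ⟨s, hs⟩ := hu.exists_mem
    exact hu.notMem_sPredStar (fun t ht ht' => havoid t ht ht'.2) hs (hattr ▸ huB hs)
  · intro hno
    set A := SPredStar L B {s ∈ B | SatState L θ s}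
    refine (sPredStar_subset_self (Set.sep_subset _ _)).antisymm fun s hs => ?_
    by_contra hs'
    obtain ⟨u, hu, huX⟩ := exists_isLoop_subset_of_forall_exists_succ (Set.toFinite (B \ A))
      ⟨s, hs, hs'⟩ fun t ht => exists_succ_mem_diff_sPredStar hB.2 ht
    exact hno ⟨u, hu, fun t ht => (huX ht).1,
      fun t ht hsat => (huX ht).2 (subset_sPredStar ⟨(huX ht).1, hsat⟩)⟩
end

section
/- Zero-one law on good states of a BSCC: let B be a BSCC of an LTS L, φ ∈ L⁺(F_p^∞), and N = |S| + 1. Then the set G = {b ∈ B : every run ρ of L with ρ 0 = b satisfies (ρ,N) ⊨ φ} equals either B or ∅. (Every run starting in B remains in B, since B is a BSCC.) -/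
open scoped Classical
open MeasureTheory

variable {S AP : Type}

/-- The positive fragment `L⁺(F_p^∞)`: the smallest set of formulas containing
`F_p^∞ φ` for every formula `φ` and closed under `∨`, `∧` and `F_p^∞`. -/
inductive Positive {AP : Type} : PM AP → Prop where
  | finf (φ : PM AP) : Positive (.finf φ)
  | or {φ ψ : PM AP} : Positive φ → Positive ψ → Positive (.or φ ψ)
  | and {φ ψ : PM AP} : Positive φ → Positive ψ → Positive (.and φ ψ)

lemma sat_shift (L : LTS S AP) {φ : PM AP} (hφ : Positive φ) :
    ∀ (ρ : ℕ → S) (k m : ℕ), Sat L φ ρ k → Sat L φ (shift ρ m) k := by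
  induction hφ with
  | finf ψ =>
    intro ρ k m h i
    obtain ⟨j, hj, hs⟩ := h (m + i)
    refine ⟨j, hj, ?_⟩
    have he : shift (shift ρ m) (i + j) = shift ρ (m + i + j) := by
      funext n; simp only [shift]; congr 1; omega
    rw [he]
    exact hs
  | or _ _ ih1 ih2 =>
    intro ρ k m h
    cases h with
    | inl h => exact Or.inl (ih1 ρ k m h)
    | inr h => exact Or.inr (ih2 ρ k m h)
  | and _ _ ih1 ih2 =>
    intro ρ k m h
    exact ⟨ih1 ρ k m h.1, ih2 ρ k m h.2⟩

lemma exists_path (L : LTS S AP) {a b : S} (h : Reachable L a b) :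
    ∃ m : ℕ, ∃ p : ℕ → S, p 0 = a ∧ p m = b ∧ ∀ i < m, L.T (p i) (p (i + 1)) := by
  induction h with
  | refl => exact ⟨0, fun _ => a, rfl, rfl, fun i hi => absurd hi (by omega)⟩
  | @tail c d hcd hstep ih =>
    obtain ⟨m, p, hp0, hpm, hpt⟩ := ih
    refine ⟨m + 1, fun n => if n < m + 1 then p n else d, by simp [hp0], by simp, ?_⟩
    intro i hi
    by_cases h1 : i < m
    · simp only [if_pos (by omega : i < m + 1), if_pos (by omega : i + 1 < m + 1)]
      exact hpt i h1
    · have him : i = m := by omega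
      simp only [if_pos (show i < m + 1 by omega), if_neg (show ¬ i + 1 < m + 1 by omega)]
      rw [him, hpm]
      exact hstep

/-- **zero-one law on good states of a BSCC.** For a BSCC `B` of `L`,
`φ ∈ L⁺(F_p^∞)` and `N = |S| + 1`, the set of states `b ∈ B` from which every run
satisfies `(ρ,N) ⊨ φ` is either all of `B` or empty. -/
theorem bscc_good_states_all_or_none [Fintype S] (L : LTS S AP) (B : Set S)
    (hB : IsBSCC L B) (φ : PM AP) (hφ : Positive φ) :
    {b ∈ B | ∀ ρ : ℕ → S, IsRun L ρ → ρ 0 = b → Sat L φ ρ (Fintype.card S + 1)} = B ∨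
    {b ∈ B | ∀ ρ : ℕ → S, IsRun L ρ → ρ 0 = b → Sat L φ ρ (Fintype.card S + 1)} = ∅ := by
  by_cases hG : {b ∈ B | ∀ ρ : ℕ → S, IsRun L ρ → ρ 0 = b → Sat L φ ρ (Fintype.card S + 1)} = ∅
  · exact Or.inr hG
  · left
    obtain ⟨b, hbB, hbG⟩ := Set.nonempty_iff_ne_empty.mpr hG
    apply Set.eq_of_subset_of_subset (Set.sep_subset _ _)
    intro b' hb'
    refine ⟨hb', ?_⟩
    intro ρ hρ hρ0
    -- b and b' are mutually reachable
    obtain ⟨⟨s, hs⟩, _⟩ := hB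
    have hbs := hs ▸ hbB
    have hb's := hs ▸ hb'
    have hreach : Reachable L b b' := hbs.2.trans hb's.1
    obtain ⟨m, p, hp0, hpm, hpt⟩ := exists_path L hreach
    set ρ' : ℕ → S := fun n => if n < m then p n else ρ (n - m) with hρ'
    have hρ'0 : ρ' 0 = b := by
      by_cases h0 : 0 < m
      · simp [hρ', h0, hp0]
      · have : m = 0 := by omega
        simp [hρ', this, hρ0, ← hpm, this, hp0]
    have hρ'run : IsRun L ρ' := by
      intro i
      by_cases h1 : i + 1 < m
      · simp only [hρ', if_pos (by omega : i < m), if_pos h1]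
        exact hpt i (by omega)
      · by_cases h2 : i < m
        · have him : i + 1 = m := by omega
          simp only [hρ', if_pos h2, if_neg (by omega : ¬ i + 1 < m)]
          have : ρ (i + 1 - m) = p (i + 1) := by rw [him, Nat.sub_self, hρ0, ← hpm]
          rw [this]
          exact hpt i h2
        · simp only [hρ', if_neg h2, if_neg (by omega : ¬ i + 1 < m)]
          have : i + 1 - m = (i - m) + 1 := by omega
          rw [this]
          exact hρ (i - m)
    have hsat : Sat L φ ρ' (Fintype.card S + 1) := hbG ρ' hρ'run hρ'0
    have hshift : shift ρ' m = ρ := by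
      funext n
      simp only [shift, hρ', if_neg (by omega : ¬ n + m < m)]
      congr 1; omega
    have := sat_shift L hφ ρ' (Fintype.card S + 1) m hsat
    rwa [hshift] at this
end

section
/- Let B be a BSCC of an LTS L, θ a state formula, and N = |S| + 1. Then every run ρ of L with ρ 0 ∈ B satisfies (ρ,N) ⊨ F_p^∞ θ if and only if B contains no θ-avoiding cycle. -/
open scoped Classical
open MeasureTheory

variable {S AP : Type}

/-!
A θ-avoiding loop inside `B`, traversed forever, is a run from `B` that never meets `θ`.
Conversely, a run from `B` stays in `B` because `B` is bottom, and by pigeonhole a window of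
`|S| + 1` consecutive states without `θ` repeats a state; the segment between the two
occurrences is a θ-avoiding loop inside `B`.
-/

section Runs

variable {L : LTS S AP}

theorem isRun_comp_mod {f : ℕ → S} {m : ℕ} (hm : 0 < m)
    (hf : ∀ k < m, L.T (f k) (f (k + 1))) (hper : f m = f 0) :
    IsRun L (fun n => f (n % m)) := by
  intro n
  have hlt : n % m < m := Nat.mod_lt n hm
  have hnext : f ((n + 1) % m) = f (n % m + 1) := by
    rw [← Nat.mod_add_mod]
    rcases (show n % m + 1 ≤ m from hlt).lt_or_eq with hlt' | heq
    · rw [Nat.mod_eq_of_lt hlt']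
    · rw [heq, Nat.mod_self, hper]
  simpa only [hnext] using hf _ hlt

theorem IsLoop.exists_isRun_mem {u : List S} (hu : IsLoop L u) :
    ∃ ρ : ℕ → S, IsRun L ρ ∧ ∀ n, ρ n ∈ u := by
  obtain ⟨hlen, hchain, hends⟩ := hu
  obtain ⟨s, -⟩ := List.exists_mem_of_length_pos (by omega : 0 < u.length)
  have hget : ∀ k (hk : k < u.length), u.getD k s = u[k] := fun k hk => u.getD_eq_getElem s hk
  have hm : 0 < u.length - 1 := by omega
  refine ⟨_, isRun_comp_mod (f := (u.getD · s)) hm ?_ ?_, fun n => ?_⟩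
  · intro k hk
    rw [hget k (by omega), hget (k + 1) (by omega)]
    exact List.isChain_iff_getElem.mp hchain k (by omega)
  · rw [List.head?_eq_getElem?, List.getLast?_eq_getElem?] at hends
    rw [hget _ (by omega), hget _ (by omega)]
    simpa [List.getElem?_eq_getElem (show 0 < u.length by omega),
      List.getElem?_eq_getElem (show u.length - 1 < u.length by omega)] using hends.symm
  · show u.getD _ s ∈ u
    rw [hget _ (by have := Nat.mod_lt n hm; omega)]
    exact List.getElem_mem _

theorem IsRun.isLoop_map_range' {ρ : ℕ → S} (hρ : IsRun L ρ) {a b : ℕ} (hab : a < b)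
    (heq : ρ a = ρ b) : IsLoop L ((List.range' a (b - a + 1)).map ρ) := by
  refine ⟨by simp only [List.length_map, List.length_range']; omega, ?_, ?_⟩
  · refine List.isChain_map ρ |>.mpr ((List.isChain_range' a _ 1).imp ?_)
    rintro k _ rfl
    exact hρ k
  · simp only [List.head?_map, List.getLast?_map, List.head?_range', List.getLast?_range',
      Nat.add_one_ne_zero, if_false, Option.map_some]
    rw [heq]
    congr 2
    omega

theorem IsRun.apply_mem_of_forall_mem {ρ : ℕ → S} (hρ : IsRun L ρ) {B : Set S}
    (hB : ∀ s ∈ B, ∀ t, L.T s t → t ∈ B) (h0 : ρ 0 ∈ B) (n : ℕ) : ρ n ∈ B := by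
  induction n with
  | zero => exact h0
  | succ k ih => exact hB _ ih _ (hρ k)

end Runs

theorem exists_lt_le_card_apply_eq [Fintype S] (f : ℕ → S) :
    ∃ a b, a < b ∧ b ≤ Fintype.card S ∧ f a = f b := by
  obtain ⟨x, y, hne, hxy⟩ := Fintype.exists_ne_map_eq_of_card_lt
    (fun k : Fin (Fintype.card S + 1) => f k) (by simp)
  rcases Fin.lt_or_lt_of_ne hne with h | h
  · exact ⟨x, y, h, Nat.lt_succ_iff.mp y.isLt, hxy⟩
  · exact ⟨y, x, h, Nat.lt_succ_iff.mp x.isLt, hxy.symm⟩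

/-- For a BSCC `B` of `L`, a state formula `θ` and `N = |S| + 1`:
every run `ρ` of `L` starting in `B` satisfies `(ρ,N) ⊨ F_p^∞ θ` iff `B` contains
no `θ`-avoiding cycle. -/
theorem bscc_finf_iff_no_avoiding_cycle [Fintype S] (L : LTS S AP) (B : Set S)
    (hB : IsBSCC L B) (θ : StateFormula AP) :
    (∀ ρ : ℕ → S, IsRun L ρ → ρ 0 ∈ B →
      ∀ i : ℕ, ∃ j ≤ Fintype.card S + 1, SatState L θ (ρ (i + j))) ↔
    ¬ ∃ u : List S, IsLoop L u ∧ occ u ⊆ B ∧ ∀ s ∈ u, ¬ SatState L θ s := by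
  constructor
  · rintro h ⟨u, hu, huB, havoid⟩
    obtain ⟨ρ, hρ, hρu⟩ := IsLoop.exists_isRun_mem hu
    obtain ⟨j, -, hsat⟩ := h ρ hρ (huB (hρu 0)) 0
    exact havoid _ (hρu _) hsat
  · intro hnoloop ρ hρ h0 i
    by_contra! hcon
    obtain ⟨a, b, hab, hb, heq⟩ := exists_lt_le_card_apply_eq fun k => ρ (i + k)
    refine hnoloop ⟨_, IsRun.isLoop_map_range' hρ (by omega : i + a < i + b) heq, ?_, ?_⟩
    · intro s hs
      obtain ⟨k, -, rfl⟩ := List.mem_map.mp hs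
      exact IsRun.apply_mem_of_forall_mem hρ hB.2 h0 k
    · intro s hs
      obtain ⟨k, hk, rfl⟩ := List.mem_map.mp hs
      obtain ⟨j, rfl⟩ := Nat.exists_eq_add_of_le (List.mem_range'_1.mp hk).1
      have hj := (List.mem_range'_1.mp hk).2
      simpa only [add_assoc] using hcon (a + j) (by omega)
end

section
/- Zero-one law for strongly connected systems: let L be a strongly connected LTS and φ ∈ L⁺(F_p^∞), and let μ_L be the fair-coin measure of L. Then either there exists k ∈ ℕ with μ_L({ρ : (ρ,k) ⊨ φ}) = 1, or for every k ∈ ℕ, μ_L({ρ : (ρ,k) ⊨ φ}) = 0. -/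
open scoped Classical
open MeasureTheory

variable {S AP : Type}

/-!
A run is generic if every finite path of `L` occurs in it infinitely often. Satisfaction of
`F_p^∞ χ` at bound `k` only asks that `χ` recurs in windows of length `k`, and whether `χ`
holds at a position of a generic run depends only on boundedly many following states; since
every window of one generic run occurs in any other, a positive formula holds at bound `k`
on all generic runs or on none. Strong connectivity makes almost every run generic: from any
state the next `M` steps spell out a given path with probability at least `|S|⁻¹ ^ M`, so a
run avoids that path during `r` consecutive blocks with probability at most
`(1 - |S|⁻¹ ^ M) ^ r`.
-/

lemma IsRun.shift {L : LTS S AP} {ρ : ℕ → S} (hρ : IsRun L ρ) (m : ℕ) : IsRun L (shift ρ m) :=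
  fun i => by simpa only [_root_.shift, Nat.add_right_comm] using hρ (i + m)

def IsGeneric (L : LTS S AP) (ρ : ℕ → S) : Prop :=
  IsRun L ρ ∧ ∀ σ : ℕ → S, IsRun L σ → ∀ n N : ℕ, ∃ p ≥ N, ∀ t ≤ n, ρ (p + t) = σ t

section Generic

variable {L : LTS S AP}

lemma IsGeneric.shift {ρ : ℕ → S} (hρ : IsGeneric L ρ) (m : ℕ) : IsGeneric L (shift ρ m) := by
  refine ⟨hρ.1.shift m, fun σ hσ n N => ?_⟩
  obtain ⟨p, hp, hmatch⟩ := hρ.2 σ hσ n (N + m)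
  refine ⟨p - m, by omega, fun t ht => ?_⟩
  rw [← hmatch t ht, _root_.shift]
  congr 1
  omega

def SatDeterminedBy (L : LTS S AP) (k c : ℕ) (ψ : PM AP) : Prop :=
  ∀ ρ σ, IsGeneric L ρ → IsGeneric L σ → (∀ t ≤ c, ρ t = σ t) → Sat L ψ ρ k → Sat L ψ σ k

lemma SatDeterminedBy.mono {k c c' : ℕ} {ψ : PM AP} (h : SatDeterminedBy L k c ψ)
    (hc : c ≤ c') : SatDeterminedBy L k c' ψ :=
  fun ρ σ hρ hσ hag => h ρ σ hρ hσ fun t ht => hag t (ht.trans hc)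

/- To find `χ` within `k` steps after position `i` of `σ`, look for the window
`σ i, …, σ (i + k + c)` in `ρ`, where `F_p^∞ χ` provides a witness within `k` steps. -/
lemma sat_finf_of_isGeneric {k c : ℕ} {χ : PM AP} (hχ : SatDeterminedBy L k c χ)
    {ρ σ : ℕ → S} (hρ : IsGeneric L ρ) (hσ : IsGeneric L σ) (h : Sat L (.finf χ) ρ k) :
    Sat L (.finf χ) σ k := by
  intro i
  obtain ⟨p, -, hmatch⟩ := hρ.2 (shift σ i) (hσ.1.shift i) (k + c) 0
  obtain ⟨j, hj, hsat⟩ := h p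
  refine ⟨j, hj, hχ _ _ (hρ.shift (p + j)) (hσ.shift (i + j)) (fun t ht => ?_) hsat⟩
  have := hmatch (j + t) (by omega)
  simp only [shift] at this ⊢
  rw [show t + (p + j) = p + (j + t) by omega, this, show j + t + i = t + (i + j) by omega]

lemma exists_satDeterminedBy (k : ℕ) (ψ : PM AP) : ∃ c, SatDeterminedBy L k c ψ := by
  induction ψ with
  | pos a => exact ⟨0, fun ρ σ _ _ hag h => by simpa [Sat, ← hag 0 le_rfl] using h⟩
  | neg a => exact ⟨0, fun ρ σ _ _ hag h => by simpa [Sat, ← hag 0 le_rfl] using h⟩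
  | or φ ψ ihφ ihψ =>
    obtain ⟨c₁, h₁⟩ := ihφ
    obtain ⟨c₂, h₂⟩ := ihψ
    refine ⟨max c₁ c₂, fun ρ σ hρ hσ hag h => h.imp ?_ ?_⟩
    · exact (h₁.mono (le_max_left _ _)) ρ σ hρ hσ hag
    · exact (h₂.mono (le_max_right _ _)) ρ σ hρ hσ hag
  | and φ ψ ihφ ihψ =>
    obtain ⟨c₁, h₁⟩ := ihφ
    obtain ⟨c₂, h₂⟩ := ihψ
    refine ⟨max c₁ c₂, fun ρ σ hρ hσ hag h => h.imp ?_ ?_⟩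
    · exact (h₁.mono (le_max_left _ _)) ρ σ hρ hσ hag
    · exact (h₂.mono (le_max_right _ _)) ρ σ hρ hσ hag
  | finf χ ih =>
    obtain ⟨c, hc⟩ := ih
    exact ⟨0, fun ρ σ hρ hσ _ => sat_finf_of_isGeneric hc hρ hσ⟩

lemma Positive.sat_of_isGeneric {k : ℕ} {φ : PM AP} (hφ : Positive φ) {ρ σ : ℕ → S}
    (hρ : IsGeneric L ρ) (hσ : IsGeneric L σ) (h : Sat L φ ρ k) : Sat L φ σ k := by
  induction hφ with
  | finf ψ =>
    obtain ⟨c, hc⟩ := exists_satDeterminedBy k ψ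
    exact sat_finf_of_isGeneric hc hρ hσ h
  | or _ _ ih₁ ih₂ => exact h.imp ih₁ ih₂
  | and _ _ ih₁ ih₂ => exact h.imp ih₁ ih₂

end Generic

open Finset

section PathProb

variable (L : LTS S AP)

lemma chainProb_cons_cons (s t : S) (w : List S) :
    chainProb L (s :: t :: w) = stepProb L s t * chainProb L (t :: w) := rfl

lemma chainProb_append (u : List S) (s : S) (w : List S) :
    chainProb L (u ++ s :: w) = chainProb L (u ++ [s]) * chainProb L (s :: w) := by
  induction u with
  | nil => simp [chainProb]
  | cons a u ih =>
    cases u with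
    | nil => simp [chainProb_cons_cons, chainProb]
    | cons b u => simp only [List.cons_append, chainProb_cons_cons] at ih ⊢; rw [ih, mul_assoc]

lemma pathProb_ofFn_append {q m : ℕ} (u : Fin (q + 1) → S) (w : Fin m → S) :
    pathProb L (List.ofFn u ++ List.ofFn w)
      = pathProb L (List.ofFn u) * chainProb L (u (Fin.last q) :: List.ofFn w) := by
  have hu : List.ofFn u = List.ofFn (fun i : Fin q => u i.castSucc) ++ [u (Fin.last q)] := by
    rw [List.ofFn_succ', List.concat_eq_append]
  have hhead : (List.ofFn u ++ List.ofFn w).head? = (List.ofFn u).head? := by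
    simp [List.ofFn_succ]
  cases m with
  | zero => simp [chainProb]
  | succ m =>
    rw [pathProb, pathProb, hhead, hu, List.append_assoc, List.singleton_append,
      chainProb_append, mul_assoc]

lemma chainProb_eq_zero_of_not_isChain {w : List S} (hw : ¬ w.IsChain L.T) :
    chainProb L w = 0 := by
  induction w with
  | nil => simp at hw
  | cons s w ih =>
    cases w with
    | nil => simp at hw
    | cons t w =>
      rw [List.isChain_cons_cons, not_and_or] at hw
      rw [chainProb_cons_cons]
      rcases hw with hst | hw
      · simp [stepProb, hst]
      · simp [ih hw]

lemma mem_Cyl_ofFn (ρ : ℕ → S) (q : ℕ) : ρ ∈ Cyl (List.ofFn fun i : Fin q => ρ i) :=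
  fun i => by simp

variable [Fintype S]

lemma sum_stepProb (s : S) : ∑ t, stepProb L s t = 1 := by
  have hcard : Nat.card {u // L.T s u} = #{t | L.T s t} := by
    rw [Nat.card_eq_fintype_card, Fintype.card_subtype]
  have hne : #{t | L.T s t} ≠ 0 := by
    obtain ⟨t, ht⟩ := L.succ_nonempty s
    exact card_ne_zero_of_mem (mem_filter.2 ⟨mem_univ t, ht⟩)
  calc ∑ t, stepProb L s t
      = ∑ t with L.T s t, (Nat.card {u // L.T s u} : ENNReal)⁻¹ := by
        rw [sum_filter]; rfl
    _ = 1 := by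
        rw [sum_const, nsmul_eq_mul, hcard]
        exact ENNReal.mul_inv_cancel (by exact_mod_cast hne) (ENNReal.natCast_ne_top _)

lemma sum_chainProb_cons (m : ℕ) (s : S) : ∑ w : Fin m → S, chainProb L (s :: List.ofFn w) = 1 := by
  induction m generalizing s with
  | zero => simp [chainProb]
  | succ m ih =>
    rw [← (Fin.consEquiv fun _ => S).sum_comp, Fintype.sum_prod_type]
    have hcons (t : S) (w : Fin m → S) :
        List.ofFn (Fin.consEquiv (fun _ => S) (t, w)) = t :: List.ofFn w := List.ofFn_cons t w
    simp only [hcons, chainProb_cons_cons, ← mul_sum, ih, mul_one, sum_stepProb]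

lemma sum_pathProb (m : ℕ) : ∑ w : Fin (m + 1) → S, pathProb L (List.ofFn w) = 1 := by
  rw [← (Fin.consEquiv fun _ => S).sum_comp, Fintype.sum_prod_type,
    sum_eq_single L.init (fun s _ hs => by simp [pathProb, hs]) (by simp)]
  simp [pathProb, sum_chainProb_cons]

lemma inv_card_le_stepProb {s t : S} (h : L.T s t) :
    (Fintype.card S : ENNReal)⁻¹ ≤ stepProb L s t := by
  rw [stepProb, if_pos h, Nat.card_eq_fintype_card]
  exact ENNReal.inv_le_inv.2 (by exact_mod_cast Fintype.card_subtype_le _)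

lemma inv_card_pow_le_chainProb {s : S} {w : List S} (hw : (s :: w).IsChain L.T) :
    (Fintype.card S : ENNReal)⁻¹ ^ w.length ≤ chainProb L (s :: w) := by
  induction w generalizing s with
  | nil => simp [chainProb]
  | cons t w ih =>
    rw [List.isChain_cons_cons] at hw
    rw [chainProb_cons_cons, List.length_cons, pow_succ']
    exact mul_le_mul' (inv_card_le_stepProb L hw.1) (ih hw.2)

noncomputable def prefixProb (P : List S → Prop) (q : ℕ) : ENNReal :=
  ∑ w : Fin q → S with P (List.ofFn w), pathProb L (List.ofFn w)

lemma prefixProb_le_one (P : List S → Prop) (q : ℕ) : prefixProb L P (q + 1) ≤ 1 :=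
  (sum_le_sum_of_subset (filter_subset _ _)).trans_eq (sum_pathProb L q)

lemma sum_chainProb_cons_erase {m : ℕ} (s : S) (g : Fin m → S) :
    ∑ w ∈ univ.erase g, chainProb L (s :: List.ofFn w) = 1 - chainProb L (s :: List.ofFn g) := by
  have hsum := add_sum_erase univ (fun w : Fin m → S => chainProb L (s :: List.ofFn w)) (mem_univ g)
  rw [sum_chainProb_cons] at hsum
  refine ENNReal.eq_sub_of_add_eq' ENNReal.one_ne_top ?_
  rw [add_comm, hsum]

lemma prefixProb_add_le {P : List S → Prop} {q M : ℕ} {ε : ENNReal} (g : S → Fin M → S)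
    (hg : ∀ s, ε ≤ chainProb L (s :: List.ofFn (g s)))
    (hP : ∀ u w, P (List.ofFn u ++ List.ofFn w) → P (List.ofFn u) ∧ w ≠ g (u (Fin.last q))) :
    prefixProb L P (q + 1 + M) ≤ (1 - ε) * prefixProb L P (q + 1) := by
  rw [prefixProb, prefixProb, sum_filter, sum_filter, mul_sum,
    ← (Fin.appendEquiv (q + 1) M).sum_comp, Fintype.sum_prod_type]
  refine sum_le_sum fun u _ => ?_
  have happend (w : Fin M → S) :
      List.ofFn (Fin.appendEquiv (q + 1) M (u, w)) = List.ofFn u ++ List.ofFn w :=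
    List.ofFn_fin_append u w
  simp only [happend]
  by_cases hu : P (List.ofFn u)
  · calc _ ≤ ∑ w ∈ univ.erase (g (u (Fin.last q))),
            pathProb L (List.ofFn u) * chainProb L (u (Fin.last q) :: List.ofFn w) := by
          rw [← filter_ne', sum_filter]
          refine sum_le_sum fun w _ => ?_
          split_ifs with hw hne
          · rw [pathProb_ofFn_append]
          · exact absurd (hP u w hw).2 hne
          · exact zero_le
          · exact zero_le
      _ ≤ (1 - ε) * pathProb L (List.ofFn u) := by
          rw [← mul_sum, sum_chainProb_cons_erase, mul_comm]
          exact mul_le_mul_left (tsub_le_tsub_left (hg _) 1) _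
      _ = _ := by rw [if_pos hu]
  · exact (sum_eq_zero fun w _ => if_neg fun h => hu (hP u w h).1).trans_le zero_le

end PathProb

lemma exists_run_through {L : LTS S AP} {s : S} {σ : ℕ → S} (hσ : IsRun L σ)
    (h : Reachable L s (σ 0)) : ∃ τ d, IsRun L τ ∧ τ 0 = s ∧ ∀ t, τ (d + t) = σ t := by
  induction h using Relation.ReflTransGen.head_induction_on with
  | refl => exact ⟨σ, 0, hσ, rfl, by simp⟩
  | @head s s' hss' _ ih =>
    obtain ⟨τ, d, hτ, hτ0, hτσ⟩ := ih
    refine ⟨fun i => if i = 0 then s else τ (i - 1), d + 1, fun i => ?_, rfl, fun t => ?_⟩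
    · rcases i with _ | i
      · simpa [hτ0] using hss'
      · simpa using hτ i
    · simpa [show d + 1 + t - 1 = d + t by omega] using hτσ t

def OccursAt (σ : ℕ → S) (n : ℕ) (w : List S) (p : ℕ) : Prop :=
  ∀ t ≤ n, w[p + t]? = some (σ t)

lemma OccursAt.append {σ : ℕ → S} {n p : ℕ} {u : List S} (h : OccursAt σ n u p) (w : List S) :
    OccursAt σ n (u ++ w) p := fun t ht => by
  rw [List.getElem?_append_left (List.getElem?_eq_some_iff.1 (h t ht)).1]
  exact h t ht

section FairMeasure

variable [Fintype S] [MeasurableSpace S] {L : LTS S AP} {μ : Measure (ℕ → S)}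

lemma measure_le_prefixProb (hμ : IsFairMeasure L μ)
    {A : Set (ℕ → S)} {P : List S → Prop} {q : ℕ}
    (hA : ∀ ρ ∈ A, P (List.ofFn fun i : Fin (q + 1) => ρ i)) : μ A ≤ prefixProb L P (q + 1) := by
  have hcover : A ⊆ ⋃ w ∈ ({w | P (List.ofFn w)} : Finset (Fin (q + 1) → S)), Cyl (List.ofFn w) :=
    fun ρ hρ => Set.mem_biUnion (by simpa using hA ρ hρ) (mem_Cyl_ofFn ρ (q + 1))
  refine (measure_mono hcover).trans ((measure_biUnion_finset_le _ _).trans_eq ?_)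
  exact sum_congr rfl fun w _ => hμ.2 _ (by simp)

lemma measure_eq_zero_of_prefixProb_le_mul (hμ : IsFairMeasure L μ) {A : Set (ℕ → S)}
    {P : List S → Prop} (hA : ∀ ρ ∈ A, ∀ q, P (List.ofFn fun i : Fin (q + 1) => ρ i))
    {N M : ℕ} {ε : ENNReal} (hε : ε ≠ 0)
    (hstep : ∀ q ≥ N, prefixProb L P (q + 1 + M) ≤ (1 - ε) * prefixProb L P (q + 1)) :
    μ A = 0 := by
  have hdecay (r : ℕ) : prefixProb L P (N + r * M + 1) ≤ (1 - ε) ^ r := by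
    induction r with
    | zero => simpa using prefixProb_le_one L P N
    | succ r ih =>
      calc prefixProb L P (N + (r + 1) * M + 1)
          = prefixProb L P (N + r * M + 1 + M) := by ring_nf
        _ ≤ (1 - ε) * prefixProb L P (N + r * M + 1) := hstep _ (by omega)
        _ ≤ (1 - ε) ^ (r + 1) := by rw [pow_succ']; gcongr
  have hlim := ENNReal.tendsto_pow_atTop_nhds_zero_of_lt_one
    (ENNReal.sub_lt_self ENNReal.one_ne_top one_ne_zero hε)
  exact le_antisymm (ge_of_tendsto' hlim fun r =>
    (measure_le_prefixProb hμ fun ρ hρ => hA ρ hρ _).trans (hdecay r)) zero_le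

/- From each state `s` a run `τ s` reaches `σ` within `D` steps, so every block of
`M = D + n + 1` fresh states copies `τ s` with probability at least `|S|⁻¹ ^ M`,
and then contains `σ 0, …, σ n`. -/
lemma ae_occurs (hμ : IsFairMeasure L μ) (hsc : ∀ s t : S, Reachable L s t) {σ : ℕ → S}
    (hσ : IsRun L σ) (n N : ℕ) : ∀ᵐ ρ ∂μ, ∃ p ≥ N, ∀ t ≤ n, ρ (p + t) = σ t := by
  choose τ d hτ hτ0 hτσ using fun s => exists_run_through hσ (hsc s (σ 0))
  set M := univ.sup d + n + 1
  let g : S → Fin M → S := fun s j => τ s (j + 1)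
  have hg (s : S) : s :: List.ofFn (g s) = List.ofFn fun j : Fin (M + 1) => τ s j := by
    simp [List.ofFn_succ, hτ0, g]
  rw [ae_iff]
  refine measure_eq_zero_of_prefixProb_le_mul hμ (P := fun w => ∀ p ≥ N, ¬ OccursAt σ n w p)
    (N := N) (M := M) (ε := (Fintype.card S : ENNReal)⁻¹ ^ M) ?_
    (pow_ne_zero _ (ENNReal.inv_ne_zero.2 (ENNReal.natCast_ne_top _))) fun q hq => ?_
  · intro ρ hρ q p hp hocc
    simp only [Set.mem_ofPred_eq, not_exists, not_and, not_forall] at hρ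
    obtain ⟨t, ht, hne⟩ := hρ p hp
    have := hocc t ht
    rw [List.getElem?_ofFn] at this
    split_ifs at this
    exact hne (Option.some_injective _ this)
  refine prefixProb_add_le L g (fun s => ?_)
    fun u w hw => ⟨fun p hp hocc => hw p hp (hocc.append _), ?_⟩
  · have hchain : (s :: List.ofFn (g s)).IsChain L.T := by
      rw [hg, List.isChain_ofFn]
      exact fun i _ => hτ s i
    simpa using inv_card_pow_le_chainProb L hchain
  · rintro rfl
    set s := u (Fin.last q)
    have hd : d s ≤ univ.sup d := le_sup (mem_univ s)
    refine hw (q + d s) (by omega) fun t ht => ?_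
    rw [List.ofFn_succ', List.concat_eq_append, List.append_assoc, List.singleton_append, hg,
      List.getElem?_append_right (by simp only [List.length_ofFn]; omega), List.getElem?_ofFn]
    simp only [List.length_ofFn, show q + d s + t - q = d s + t by omega]
    rw [dif_pos (by omega)]
    exact congrArg some (hτσ s t)

lemma ae_isRun (hμ : IsFairMeasure L μ) : ∀ᵐ ρ ∂μ, IsRun L ρ := by
  refine ae_all_iff.2 fun i => ae_iff.2 (le_antisymm ?_ zero_le)
  calc μ {ρ | ¬ L.T (ρ i) (ρ (i + 1))}
      ≤ prefixProb L (fun w => ¬ w.IsChain L.T) (i + 1 + 1) := by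
        refine measure_le_prefixProb hμ fun ρ hρ hchain => hρ ?_
        exact List.isChain_ofFn.1 hchain i (by omega)
    _ = 0 := sum_eq_zero fun w hw => by
        rw [pathProb, chainProb_eq_zero_of_not_isChain L (by simpa using hw), mul_zero]

lemma ae_isGeneric (hμ : IsFairMeasure L μ) (hsc : ∀ s t : S, Reachable L s t) :
    ∀ᵐ ρ ∂μ, IsGeneric L ρ := by
  -- Quantify over the finitely many length-`n + 1` prefixes of runs, not over the runs.
  have hpatterns : ∀ᵐ ρ ∂μ, ∀ (n N : ℕ) (x : Fin (n + 1) → S) (σ : ℕ → S), IsRun L σ →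
      (∀ t : Fin (n + 1), σ t = x t) → ∃ p ≥ N, ∀ t ≤ n, ρ (p + t) = σ t := by
    refine ae_all_iff.2 fun n => ae_all_iff.2 fun N => ae_all_iff.2 fun x => ?_
    by_cases hx : ∃ σ₀, IsRun L σ₀ ∧ ∀ t : Fin (n + 1), σ₀ t = x t
    · obtain ⟨σ₀, hσ₀, hσ₀x⟩ := hx
      filter_upwards [ae_occurs hμ hsc hσ₀ n N] with ρ ⟨p, hp, hocc⟩ σ _ hσx
      refine ⟨p, hp, fun t ht => ?_⟩
      rw [hocc t ht]
      exact (hσ₀x ⟨t, by omega⟩).trans (hσx ⟨t, by omega⟩).symm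
    · exact Filter.Eventually.of_forall fun ρ σ hσ hσx => absurd ⟨σ, hσ, hσx⟩ hx
  filter_upwards [ae_isRun hμ, hpatterns] with ρ hρ hocc
  exact ⟨hρ, fun σ hσ n N => hocc n N (fun t => σ t) σ hσ fun _ => rfl⟩

end FairMeasure

theorem zero_one_law_general [Fintype S] [MeasurableSpace S]
    (L : LTS S AP) (hsc : ∀ s t : S, Reachable L s t)
    (φ : PM AP) (hφ : Positive φ) (μ : Measure (ℕ → S)) (hμ : IsFairMeasure L μ) :
    (∃ k : ℕ, μ {ρ : ℕ → S | Sat L φ ρ k} = 1) ∨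
    (∀ k : ℕ, μ {ρ : ℕ → S | Sat L φ ρ k} = 0) := by
  have hgen := ae_isGeneric hμ hsc
  by_cases h : ∃ k ρ₀, IsGeneric L ρ₀ ∧ Sat L φ ρ₀ k
  · obtain ⟨k, ρ₀, hρ₀, hsat⟩ := h
    have hsat_ae : ∀ᵐ ρ ∂μ, Sat L φ ρ k :=
      hgen.mono fun ρ hρ => hφ.sat_of_isGeneric hρ₀ hρ hsat
    have : IsProbabilityMeasure μ := hμ.1
    refine Or.inl ⟨k, ?_⟩
    rw [← measure_univ (μ := μ)]
    exact measure_congr (ae_eq_univ.2 (ae_iff.1 hsat_ae))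
  · simp only [not_exists, not_and] at h
    exact Or.inr fun k => measure_mono_null (fun ρ hsat hρ => h k ρ hρ hsat) (ae_iff.1 hgen)

/-- **zero-one law for strongly connected systems.** For a strongly
connected LTS `L`, `φ ∈ L⁺(F_p^∞)` and `μ` the fair-coin measure of `L`: either
there is `k` with `μ {ρ : (ρ,k) ⊨ φ} = 1`, or `μ {ρ : (ρ,k) ⊨ φ} = 0` for every `k`. -/
theorem zero_one_law [Fintype S] [MeasurableSpace S] [DiscreteMeasurableSpace S]
    (L : LTS S AP) (hsc : ∀ s t : S, Reachable L s t)
    (φ : PM AP) (hφ : Positive φ) (μ : Measure (ℕ → S)) (hμ : IsFairMeasure L μ) :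
    (∃ k : ℕ, μ {ρ : ℕ → S | Sat L φ ρ k} = 1) ∨
    (∀ k : ℕ, μ {ρ : ℕ → S | Sat L φ ρ k} = 0) :=
  zero_one_law_general L hsc φ hφ μ hμ
end

section
/- Separation of weak and strong prompt semantics: let AP = {A, B} and let L be the LTS with S = {a, b}, s_init = a, T = {(a,a), (a,b), (b,b)}, lbl(a) = {A}, lbl(b) = {B}, and let φ = F_p^∞ A ∨ F_p^∞ B. Then: (i) for every initialized run ρ of L there exists k ∈ ℕ with (ρ,k) ⊨ φ (weak semantics holds); but (ii) there is no k ∈ ℕ such that every initialized run ρ of L satisfies (ρ,k) ⊨ φ (strong semantics fails). -/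
open scoped Classical
open MeasureTheory

variable {S AP : Type}

/-- The LTS of Fig. 4: states `a = 0` and `b = 1`, transitions
`(a,a), (a,b), (b,b)`, atomic propositions `A = 0` on `a` and `B = 1` on `b`. -/
def exLTS : LTS (Fin 2) (Fin 2) where
  init := 0
  T := fun s t => ¬ (s = 1 ∧ t = 0)
  lbl := fun s => {s}
  succ_nonempty := fun s => ⟨1, fun h => absurd h.2 (by decide)⟩

/-- The formula `φ = F_p^∞ A ∨ F_p^∞ B`. -/
def exφ : PM (Fin 2) := .or (.finf (.pos 0)) (.finf (.pos 1))

/-- **separation of weak and strong prompt semantics.**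
(i) every initialized run of `exLTS` satisfies `exφ` for some bound `k`, but
(ii) no bound `k` works uniformly for all initialized runs. -/
theorem weak_strong_separation :
    (∀ ρ : ℕ → Fin 2, IsRun exLTS ρ → ρ 0 = exLTS.init → ∃ k : ℕ, Sat exLTS exφ ρ k) ∧
    ¬ (∃ k : ℕ, ∀ ρ : ℕ → Fin 2, IsRun exLTS ρ → ρ 0 = exLTS.init → Sat exLTS exφ ρ k) := by
  have htwo : ∀ s : Fin 2, s ≠ 0 → s = 1 := by decide
  constructor
  · intro ρ hρ h0
    by_cases h : ∀ n, ρ n = 0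
    · exact ⟨0, Or.inl fun i => ⟨0, le_refl 0, by simp [Sat, shift, exLTS, h]⟩⟩
    · push_neg at h
      obtain ⟨n, hn⟩ := h
      have hstep : ∀ d, ρ (n + d) = 1 := by
        intro d
        induction d with
        | zero => exact htwo _ hn
        | succ d ih =>
          have := hρ (n + d)
          apply htwo
          intro h0'
          exact this ⟨ih, h0'⟩
      have hmono : ∀ m, n ≤ m → ρ m = 1 := by
        intro m hm
        have := hstep (m - n)
        rwa [Nat.add_sub_cancel' hm] at this
      refine ⟨n, Or.inr fun i => ?_⟩
      by_cases hi : n ≤ i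
      · exact ⟨0, Nat.zero_le n, by simp [Sat, shift, exLTS, hmono i (by omega)]⟩
      · exact ⟨n - i, Nat.sub_le n i,
          by simp [Sat, shift, exLTS, hmono (i + (n - i)) (by omega), hmono (0 + (i + (n - i))) (by omega)]⟩
  · rintro ⟨k, hk⟩
    set ρ : ℕ → Fin 2 := fun n => if n ≤ k then 0 else 1 with hρdef
    have hrun : IsRun exLTS ρ := by
      intro i
      simp only [exLTS, ρ]
      rintro ⟨h1, h0⟩
      split at h1
      · exact absurd h1 (by decide)
      · split at h0
        · omega
        · exact absurd h0 (by decide)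
    have h0 : ρ 0 = exLTS.init := by simp [ρ, exLTS]
    rcases hk ρ hrun h0 with hA | hB
    · obtain ⟨j, hj, hsat⟩ := hA (k + 1)
      simp only [Sat, shift, exLTS, ρ] at hsat
      rw [if_neg (by omega)] at hsat
      exact absurd hsat (by decide)
    · obtain ⟨j, hj, hsat⟩ := hB 0
      simp only [Sat, shift, exLTS, ρ] at hsat
      rw [if_pos (by omega)] at hsat
      exact absurd hsat (by decide)
end
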